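/- For all positive integers r, n and every 0 ≤ k ≤ n, the number of r-FSchröder paths of size n having exactly k diagonal steps equals the number of r-Schröder paths of size n having exactly k diagonal steps, i.e. equals |Sch_{n, n−k}^r| = (1/((n−k)r+1))·C(n, n−k)·C((n−k)r+n, n); the bijection is given by reflecting paths across the anti-diagonal, which exchanges down steps with right steps and exchanges the diagonal steps (1,−r) and (r,−1). -/

import Mathlib

/-- Steps of an `r`-Schröder path: down `(0,-1)`, right `(1,0)`, diagonal `(r,-1)`. -/
inductive SStep : Type
  | down | right | diag
deriving DecidableEq

/-- Displacement of a step for slope parameter `r`. -/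
def sDisp (r : ℤ) : SStep → ℤ × ℤ
  | .down => (0, -1)
  | .right => (1, 0)
  | .diag => (r, -1)

/-- Position reached after performing the steps `l`, starting at `(0, n)`. -/
def sPos (r n : ℤ) (l : List SStep) : ℤ × ℤ :=
  l.foldl (fun p s => p + sDisp r s) (0, n)

/-- `α` is an `r`-Schröder path of size `n`: it goes from `(0,n)` to `(r*n, 0)` and never
passes strictly above the line segment joining `(0,n)` and `(r*n,0)`
(the segment lies on the line `x + r*y = r*n`). -/
def IsSchroder (r n : ℕ) (α : List SStep) : Prop :=
  sPos r n α = ((r : ℤ) * n, 0) ∧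
  ∀ β, β <+: α → (sPos r n β).1 + (r : ℤ) * (sPos r n β).2 ≤ (r : ℤ) * n

/-- `Sch r n d` : the set of `r`-Schröder paths of size `n` with exactly `n - d`
diagonal steps. -/
def Sch (r n d : ℕ) : Set (List SStep) :=
  {α | IsSchroder r n α ∧ α.count SStep.diag = n - d}

/-- Displacement of a step for an `r`-FSchröder path (unit-fraction slope `1/r`):
down `(0,-1)`, right `(1,0)`, diagonal `(1,-r)`. -/
def fDisp (r : ℤ) : SStep → ℤ × ℤ
  | .down => (0, -1)
  | .right => (1, 0)
  | .diag => (1, -r)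

/-- Position reached after performing the steps `l`, starting at `(0, r*n)`. -/
def fPos (r n : ℤ) (l : List SStep) : ℤ × ℤ :=
  l.foldl (fun p s => p + fDisp r s) (0, r * n)

/-- `α` is an `r`-FSchröder path of size `n`: it goes from `(0, n*r)` to `(n, 0)` and
never passes strictly above the segment joining `(0, n*r)` and `(n, 0)`
(the segment lies on the line `r*x + y = r*n`). -/
def IsFSchroder (r n : ℕ) (α : List SStep) : Prop :=
  fPos r n α = ((n : ℤ), 0) ∧
  ∀ β, β <+: α → (r : ℤ) * (fPos r n β).1 + (fPos r n β).2 ≤ (r : ℤ) * n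

/-- `FSch r n k` : the set of `r`-FSchröder paths of size `n` with exactly `k`
diagonal steps. -/
def FSch (r n k : ℕ) : Set (List SStep) :=
  {α | IsFSchroder r n α ∧ α.count SStep.diag = k}


/-- Reflection across the anti-diagonal on steps: it exchanges down and right steps and
fixes diagonal steps (turning the FSchröder diagonal `(1,-r)` into the Schröder
diagonal `(r,-1)`). The reflected path is `(α.map reflStep).reverse`. -/
def reflStep : SStep → SStep
  | .down => .right
  | .right => .down
  | .diag => .diag

/-!
Reflecting a path across the anti-diagonal and reversing it swaps down and right steps and turns
the diagonal `(1,-r)` into `(r,-1)`. For an FSchröder path ending at `(n, 0)`, the reflected path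
stands at `(y, x)` after the reflection of a suffix, where `(x, y)` is the point the original path
reaches after the complementary prefix; since `r x + y ≤ r n` is `y + r x ≤ r n`, the two
"never above the segment" conditions correspond.

For the count, with `d = n - k`, weight down, right and diagonal steps by `r`, `-1`, `0`: a
Schröder path is a word with `d` down, `r d` right and `k` diagonal steps whose prefixes all have
nonnegative weight. Appending a right step turns it into a word of total weight `-1` whose proper
prefixes are nonnegative, and by the cycle lemma exactly one of the `N = (r + 1) d + k + 1`
rotations of any word of weight `-1` is of this form. Hence `N * |Sch| = N! / (d! (r d + 1)! k!)`.
-/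

open Function
open scoped Nat

def reflectPath (α : List SStep) : List SStep := (α.map reflStep).reverse

@[simp] lemma reflStep_reflStep (s : SStep) : reflStep (reflStep s) = s := by
  cases s <;> rfl

@[simp] lemma reflectPath_reflectPath (α : List SStep) : reflectPath (reflectPath α) = α := by
  simp [reflectPath, List.map_reverse, comp_def]

lemma reflectPath_append (δ γ : List SStep) :
    reflectPath (δ ++ γ) = reflectPath γ ++ reflectPath δ := by
  simp [reflectPath]

lemma count_reflectPath (α : List SStep) (s : SStep) :
    (reflectPath α).count s = α.count (reflStep s) := by
  rw [reflectPath, List.count_reverse]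
  simpa using List.count_map_of_injective α reflStep
    (LeftInverse.injective reflStep_reflStep) (reflStep s)

lemma sPos_eq_counts (r n : ℤ) (l : List SStep) :
    sPos r n l = (l.count .right + r * l.count .diag, n - l.count .down - l.count .diag) := by
  induction l using List.reverseRecOn with
  | nil => simp [sPos]
  | append_singleton l s ih =>
    rw [sPos, List.foldl_append, ← sPos, ih]
    cases s <;> ext <;> simp [sDisp] <;> ring

lemma fPos_eq_counts (r n : ℤ) (l : List SStep) :
    fPos r n l =
      ((l.count .right : ℤ) + l.count .diag, r * n - l.count .down - r * l.count .diag) := by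
  induction l using List.reverseRecOn with
  | nil => simp [fPos]
  | append_singleton l s ih =>
    rw [fPos, List.foldl_append, ← fPos, ih]
    cases s <;> ext <;> simp [fDisp] <;> ring

lemma sPos_reflectPath_eq_iff (r n : ℤ) (α : List SStep) :
    sPos r n (reflectPath α) = (r * n, 0) ↔ fPos r n α = (n, 0) := by
  simp only [sPos_eq_counts, fPos_eq_counts, count_reflectPath, reflStep, Prod.mk.injEq]
  constructor <;> rintro ⟨h₁, h₂⟩ <;> constructor <;> linarith

lemma sPos_reflectPath_eq_swap_fPos {r n : ℤ} {δ γ : List SStep}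
    (h : fPos r n (δ ++ γ) = (n, 0)) : sPos r n (reflectPath γ) = (fPos r n δ).swap := by
  simp only [sPos_eq_counts, fPos_eq_counts, count_reflectPath, reflStep, List.count_append,
    Prod.mk.injEq, Prod.swap_prod_mk] at h ⊢
  push_cast at h
  constructor <;> linarith

theorem isSchroder_reflectPath_iff (r n : ℕ) (α : List SStep) :
    IsSchroder r n (reflectPath α) ↔ IsFSchroder r n α := by
  rw [IsSchroder, IsFSchroder, sPos_reflectPath_eq_iff]
  refine and_congr_right fun hα => ⟨fun h δ ⟨γ, hδγ⟩ => ?_, fun h β ⟨t, hβt⟩ => ?_⟩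
  · subst hδγ
    have := h (reflectPath γ) ⟨reflectPath δ, (reflectPath_append δ γ).symm⟩
    rw [sPos_reflectPath_eq_swap_fPos hα] at this
    simpa [add_comm] using this
  · have hα' : reflectPath t ++ reflectPath β = α := by
      rw [← reflectPath_append, hβt, reflectPath_reflectPath]
    rw [← hα'] at hα
    have := h (reflectPath t) ⟨reflectPath β, hα'⟩
    rw [← reflectPath_reflectPath β, sPos_reflectPath_eq_swap_fPos hα]
    simpa [add_comm] using this

theorem bijOn_reflectPath_FSch_Sch {r n k : ℕ} (hk : k ≤ n) :
    Set.BijOn reflectPath (FSch r n k) (Sch r n (n - k)) := by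
  have hdiag : n - (n - k) = k := by omega
  refine Set.InvOn.bijOn ⟨fun α _ => reflectPath_reflectPath α,
    fun α _ => reflectPath_reflectPath α⟩ ?_ ?_
  · rintro α ⟨hα, hαdiag⟩
    exact ⟨(isSchroder_reflectPath_iff r n α).2 hα, by rwa [count_reflectPath, hdiag]⟩
  · rintro α ⟨hα, hαdiag⟩
    refine ⟨?_, by rwa [count_reflectPath, ← hdiag]⟩
    rw [← isSchroder_reflectPath_iff, reflectPath_reflectPath]
    exact hα

section Words

variable {α : Type*} [DecidableEq α]

def wordsWithCounts (f : α → ℕ) : Set (List α) := {l | ∀ x, l.count x = f x}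

lemma rotate_mem_wordsWithCounts {f : α → ℕ} {l : List α} (hl : l ∈ wordsWithCounts f) (i : ℕ) :
    l.rotate i ∈ wordsWithCounts f :=
  fun x => ((List.rotate_perm l i).count_eq x).trans (hl x)

lemma cons_mem_wordsWithCounts_iff {f : α → ℕ} {x : α} {t : List α} :
    x :: t ∈ wordsWithCounts f ↔ 0 < f x ∧ t ∈ wordsWithCounts (update f x (f x - 1)) := by
  simp only [wordsWithCounts, Set.mem_ofPred_eq]
  constructor
  · intro h
    have hx := h x
    rw [List.count_cons_self] at hx
    refine ⟨by omega, fun y => ?_⟩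
    rcases eq_or_ne y x with rfl | hyx
    · rw [update_self]; omega
    · rw [update_of_ne hyx, ← h y, List.count_cons_of_ne hyx.symm]
  · rintro ⟨hx, h⟩ y
    rcases eq_or_ne y x with rfl | hyx
    · rw [List.count_cons_self, h, update_self]; omega
    · rw [List.count_cons_of_ne hyx.symm, h, update_of_ne hyx]

variable [Fintype α]

lemma length_eq_sum_of_mem_wordsWithCounts {f : α → ℕ} {l : List α}
    (hl : l ∈ wordsWithCounts f) : l.length = ∑ x, f x := by
  rw [← Finset.sum_congr rfl fun x _ => hl x]
  simpa using (Multiset.sum_count_eq_card (s := Finset.univ) (m := (l : Multiset α))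
    (fun _ _ => Finset.mem_univ _)).symm

lemma wordsWithCounts_finite (f : α → ℕ) : (wordsWithCounts f).Finite :=
  (List.finite_length_eq α (∑ x, f x)).subset fun _ => length_eq_sum_of_mem_wordsWithCounts

lemma prod_factorial_eq_mul_prod_factorial_update {f : α → ℕ} {x : α} (hx : 0 < f x) :
    ∏ y, (f y)! = f x * ∏ y, (update f x (f x - 1) y)! := by
  rw [Finset.prod_eq_mul_prod_sdiff_singleton_of_mem (Finset.mem_univ x),
    Finset.prod_eq_mul_prod_sdiff_singleton_of_mem (Finset.mem_univ x), update_self, ← mul_assoc,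
    Nat.mul_factorial_pred hx.ne']
  congr 1
  refine Finset.prod_congr rfl fun y hy => ?_
  rw [update_of_ne (by simpa using hy)]

lemma sum_update_sub_one_add_one {f : α → ℕ} {x : α} (hx : 0 < f x) :
    ∑ y, update f x (f x - 1) y + 1 = ∑ y, f y := by
  rw [Finset.sum_update_of_mem (Finset.mem_univ x),
    Finset.sum_eq_add_sum_sdiff_singleton_of_mem (Finset.mem_univ x) f]
  omega

theorem ncard_wordsWithCounts_mul_prod_factorial (f : α → ℕ) :
    (wordsWithCounts f).ncard * ∏ x, (f x)! = (∑ x, f x)! := by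
  induction h : ∑ x, f x generalizing f with
  | zero =>
    have hf : ∀ x, f x = 0 := by simpa [Finset.sum_eq_zero_iff] using h
    have : wordsWithCounts f = {[]} := by
      ext l
      simp [wordsWithCounts, hf, List.count_eq_zero, List.eq_nil_iff_forall_not_mem]
    simp [this, hf]
  | succ m ih =>
    set T : α → Set (List α) := fun x => {t | x :: t ∈ wordsWithCounts f} with hT
    have hunion : wordsWithCounts f = ⋃ x, List.cons x '' T x := by
      ext (_ | ⟨x, t⟩)
      · simpa using fun hnil => by simpa [h] using length_eq_sum_of_mem_wordsWithCounts hnil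
      · simp [hT]
    have hpart : ∀ x, (T x).ncard * ∏ y, (f y)! = f x * m ! := by
      intro x
      rcases Nat.eq_zero_or_pos (f x) with hx | hx
      · simp [hT, cons_mem_wordsWithCounts_iff, hx]
      · have hset : T x = wordsWithCounts (update f x (f x - 1)) := by
          ext t
          simp [hT, cons_mem_wordsWithCounts_iff, hx]
        have hsum : ∑ y, update f x (f x - 1) y = m := by
          have := sum_update_sub_one_add_one hx
          omega
        rw [hset, prod_factorial_eq_mul_prod_factorial_update hx, mul_left_comm, ih _ hsum]
    have hfin : ∀ x, (List.cons x '' T x).Finite := fun x =>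
      ((wordsWithCounts_finite f).preimage List.cons_injective.injOn).image _
    have hdisj : Pairwise (Disjoint on fun x => List.cons x '' T x) := by
      intro x y hxy
      rw [onFun, Set.disjoint_left]
      rintro _ ⟨_, _, rfl⟩ ⟨_, _, h⟩
      exact hxy (List.cons_eq_cons.1 h).1.symm
    rw [hunion, Set.ncard_iUnion_of_finite hfin hdisj, finsum_eq_sum_of_fintype, Finset.sum_mul]
    simp_rw [Set.ncard_image_of_injective _ List.cons_injective, hpart, ← Finset.sum_mul, h,
      Nat.factorial_succ]

end Words

def ProperPrefixSumsNonneg (l : List ℤ) : Prop := ∀ m < l.length, 0 ≤ (l.take m).sum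

theorem eq_zero_of_properPrefixSumsNonneg_rotate {l : List ℤ} (hsum : l.sum = -1)
    (hl : ProperPrefixSumsNonneg l) {j : ℕ} (hj : j < l.length)
    (hrot : ProperPrefixSumsNonneg (l.rotate j)) : j = 0 := by
  by_contra hj0
  have hdrop : (l.rotate j).take (l.length - j) = l.drop j := by
    rw [List.rotate_eq_drop_append_take hj.le, List.take_left' (by simp)]
  have hpre := hl j hj
  have hsuf := hrot (l.length - j) (by simp; omega)
  rw [hdrop] at hsuf
  have := List.sum_take_add_sum_drop l j
  omega

theorem exists_properPrefixSumsNonneg_rotate {l : List ℤ} (hsum : l.sum = -1) :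
    ∃ i < l.length, ProperPrefixSumsNonneg (l.rotate i) := by
  classical
  set N := l.length with hN
  have hN0 : 0 < N := List.length_pos_iff.2 (by rintro rfl; simp at hsum)
  let P : ℕ → ℤ := fun m => (l.take m).sum
  have hmin : ∃ i, i ≤ N ∧ ∀ j ≤ N, P i ≤ P j := by
    obtain ⟨i, hi, hmin⟩ := (Finset.range (N + 1)).exists_min_image P ⟨0, by simp⟩
    exact ⟨i, by simpa [Nat.lt_succ_iff] using hi,
      fun j hj => hmin j (by simpa [Nat.lt_succ_iff] using hj)⟩
  obtain ⟨hiN, hi⟩ := Nat.find_spec hmin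
  set i := Nat.find hmin
  have hfirst : ∀ j < i, P i < P j := fun j hj => by
    have := Nat.find_min hmin hj
    push Not at this
    obtain ⟨t, ht, hlt⟩ := this (hj.le.trans hiN)
    exact (hi t ht).trans_lt hlt
  refine ⟨i % N, Nat.mod_lt _ hN0, ?_⟩
  rw [hN, List.rotate_mod]
  intro m hm
  rw [List.length_rotate] at hm
  have hsplit : ((l.rotate i).take m).sum = P (i + m) - P i + P (m - (N - i)) := by
    have := List.take_add (l := l) (i := i) (j := m)
    rw [List.rotate_eq_drop_append_take hiN, List.take_append, List.sum_append, List.length_drop,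
      List.take_take, min_eq_left (by omega)]
    simp only [P, this, List.sum_append]
    ring
  by_cases hm' : m ≤ N - i
  · rw [hsplit, Nat.sub_eq_zero_of_le hm']
    simp only [P, List.take_zero, List.sum_nil]
    linarith [hi (i + m) (by omega)]
  · have hP : P (i + m) = -1 := by
      simp [P, List.take_of_length_le (by omega : N ≤ i + m), hsum]
    rw [hsplit, hP]
    linarith [hfirst (m - (N - i)) (by omega)]

theorem length_mul_ncard_properPrefixSumsNonneg {α : Type*} (w : α → ℤ) {S : Set (List α)}
    {N : ℕ} (hrot : ∀ l ∈ S, ∀ i, l.rotate i ∈ S) (hlen : ∀ l ∈ S, l.length = N)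
    (hsum : ∀ l ∈ S, (l.map w).sum = -1) :
    N * {l ∈ S | ProperPrefixSumsNonneg (l.map w)}.ncard = S.ncard := by
  set G := {l ∈ S | ProperPrefixSumsNonneg (l.map w)}
  let Φ : G × Fin N → S := fun p => ⟨p.1.1.rotate p.2, hrot _ p.1.2.1 _⟩
  have hunique : ∀ g₁ ∈ G, ∀ g₂ ∈ G, ∀ i₁ i₂ : Fin N, i₁ ≤ i₂ →
      g₁.rotate i₁ = g₂.rotate i₂ → i₁ = i₂ ∧ g₁ = g₂ := by
    intro g₁ hg₁ g₂ hg₂ i₁ i₂ hle h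
    have hg : g₁ = g₂.rotate (i₂ - i₁) := by
      rwa [← List.rotate_eq_rotate (n := i₁), List.rotate_rotate, Nat.sub_add_cancel hle]
    have hzero : (i₂ : ℕ) - i₁ = 0 :=
      eq_zero_of_properPrefixSumsNonneg_rotate (hsum g₂ hg₂.1) hg₂.2
        (by rw [List.length_map, hlen g₂ hg₂.1]; omega)
        (by rw [← List.map_rotate, ← hg]; exact hg₁.2)
    have hi : i₁ = i₂ := Fin.ext (by omega)
    exact ⟨hi, by rw [hg, hzero, List.rotate_zero]⟩
  have hinj : Injective Φ := by
    rintro ⟨⟨g₁, hg₁⟩, i₁⟩ ⟨⟨g₂, hg₂⟩, i₂⟩ h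
    have h' : g₁.rotate i₁ = g₂.rotate i₂ := congrArg Subtype.val h
    rcases le_total i₁ i₂ with hle | hle
    · obtain ⟨rfl, rfl⟩ := hunique g₁ hg₁ g₂ hg₂ i₁ i₂ hle h'
      rfl
    · obtain ⟨rfl, rfl⟩ := hunique g₂ hg₂ g₁ hg₁ i₂ i₁ hle h'.symm
      rfl
  have hsurj : Surjective Φ := by
    rintro ⟨l, hl⟩
    obtain ⟨i, hi, hgood⟩ := exists_properPrefixSumsNonneg_rotate (hsum l hl)
    rw [List.length_map, hlen l hl] at hi
    refine ⟨⟨⟨l.rotate i, hrot l hl i, by rwa [List.map_rotate]⟩,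
      ⟨(N - i) % N, Nat.mod_lt _ (by omega)⟩⟩, Subtype.ext ?_⟩
    show (l.rotate i).rotate ((N - i) % N) = l
    rw [← hlen l hl] at hi ⊢
    rw [← List.length_rotate l i, List.rotate_mod, List.length_rotate, List.rotate_rotate,
      Nat.add_sub_cancel' hi.le, List.rotate_length]
  rw [← Nat.card_coe_set_eq, ← Nat.card_coe_set_eq,
    ← Nat.card_eq_of_bijective Φ ⟨hinj, hsurj⟩, Nat.card_prod, Nat.card_fin, mul_comm]

instance : Fintype SStep where
  elems := {.down, .right, .diag}
  complete := by rintro (_ | _ | _) <;> simp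

@[to_additive]
lemma SStep.prod_univ {M : Type*} [CommMonoid M] (f : SStep → M) :
    ∏ s, f s = f .down * f .right * f .diag := by
  show ∏ s ∈ {SStep.down, .right, .diag}, f s = _
  rw [Finset.prod_insert (by decide), Finset.prod_pair (by decide), mul_assoc]

def stepCounts (a b c : ℕ) : SStep → ℕ
  | .down => a
  | .right => b
  | .diag => c

lemma mem_wordsWithCounts_stepCounts {a b c : ℕ} {l : List SStep} :
    l ∈ wordsWithCounts (stepCounts a b c) ↔
      l.count .down = a ∧ l.count .right = b ∧ l.count .diag = c :=
  ⟨fun h => ⟨h .down, h .right, h .diag⟩, fun ⟨h₁, h₂, h₃⟩ s => by cases s <;> assumption⟩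

/-- The increment of `r * n - (x + r * y)` along a step of an `r`-Schröder path: this quantity
is `0` on the boundary line and nonnegative below it. -/
def stepWeight (r : ℤ) : SStep → ℤ
  | .down => r
  | .right => -1
  | .diag => 0

lemma sum_map_stepWeight (r : ℤ) (l : List SStep) :
    (l.map (stepWeight r)).sum = r * l.count .down - l.count .right := by
  induction l with
  | nil => simp
  | cons s l ih => cases s <;> simp [stepWeight, ih] <;> ring

lemma sPos_le_line_iff (r n : ℤ) (β : List SStep) :
    (sPos r n β).1 + r * (sPos r n β).2 ≤ r * n ↔ 0 ≤ (β.map (stepWeight r)).sum := by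
  rw [sPos_eq_counts, sum_map_stepWeight]
  constructor <;> intro h <;> linarith

lemma mem_Sch_iff {r d k : ℕ} {α : List SStep} :
    α ∈ Sch r (d + k) d ↔
      α ∈ wordsWithCounts (stepCounts d (r * d) k) ∧
        ∀ β, β <+: α → 0 ≤ (β.map (stepWeight r)).sum := by
  simp only [Sch, IsSchroder, sPos_le_line_iff, Set.mem_ofPred_eq, Nat.add_sub_cancel_left]
  simp only [mem_wordsWithCounts_stepCounts, sPos_eq_counts, Prod.mk.injEq]
  constructor
  · rintro ⟨⟨⟨h₁, h₂⟩, hpre⟩, hk⟩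
    rw [hk] at h₁ h₂
    push_cast at h₁
    exact ⟨⟨by omega, by exact_mod_cast (by linarith : (α.count .right : ℤ) = r * d), hk⟩, hpre⟩
  · rintro ⟨⟨h₁, h₂, hk⟩, hpre⟩
    rw [h₁, h₂, hk]
    push_cast
    exact ⟨⟨⟨by ring, by ring⟩, hpre⟩, rfl⟩

lemma sum_map_stepWeight_of_mem_wordsWithCounts {r d k : ℕ} {l : List SStep}
    (hl : l ∈ wordsWithCounts (stepCounts d (r * d + 1) k)) :
    (l.map (stepWeight r)).sum = -1 := by
  rw [mem_wordsWithCounts_stepCounts] at hl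
  rw [sum_map_stepWeight, hl.1, hl.2.1]
  push_cast
  ring

theorem image_append_right_Sch (r d k : ℕ) :
    (· ++ [SStep.right]) '' Sch r (d + k) d =
      {l ∈ wordsWithCounts (stepCounts d (r * d + 1) k) |
        ProperPrefixSumsNonneg (l.map (stepWeight r))} := by
  ext l
  simp only [Set.mem_image, mem_Sch_iff, Set.mem_ofPred_eq]
  constructor
  · rintro ⟨α, ⟨hα, hpre⟩, rfl⟩
    rw [mem_wordsWithCounts_stepCounts] at hα ⊢
    refine ⟨by simp [hα], fun m hm => ?_⟩
    rw [List.length_map, List.length_append, List.length_singleton] at hm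
    rw [← List.map_take, List.take_append_of_le_length (by omega)]
    exact hpre _ (List.take_prefix m α)
  · rintro ⟨hl, hgood⟩
    have hsum := sum_map_stepWeight_of_mem_wordsWithCounts hl
    rw [mem_wordsWithCounts_stepCounts] at hl
    rcases List.eq_nil_or_concat l with rfl | ⟨α, s, rfl⟩
    · simp at hl
    simp only [List.concat_eq_append] at hl hgood hsum
    -- the last step is `right`: the total weight is `-1`, that of every proper prefix is `≥ 0`
    have hs : s = .right := by
      have hα := hgood α.length (by simp)
      rw [← List.map_take, List.take_left] at hα
      rw [List.map_append, List.sum_append] at hsum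
      cases s <;> simp [stepWeight] at hsum ⊢ <;> linarith
    subst hs
    refine ⟨α, ⟨?_, fun β hβ => ?_⟩, (List.concat_eq_append ..).symm⟩
    · rw [mem_wordsWithCounts_stepCounts]
      simpa using hl
    · rw [List.prefix_iff_eq_take.1 hβ,
        ← List.take_append_of_le_length hβ.length_le (l₂ := [.right]), List.map_take]
      exact hgood _ (by simpa using Nat.lt_succ_of_le hβ.length_le)

theorem ncard_Sch_mul_factorial (r d k : ℕ) :
    (Sch r (d + k) d).ncard * (d ! * (r * d + 1)! * k !) = (r * d + d + k)! := by
  have hcycle := length_mul_ncard_properPrefixSumsNonneg (stepWeight r)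
    (S := wordsWithCounts (stepCounts d (r * d + 1) k))
    (fun _ hl i => rotate_mem_wordsWithCounts hl i)
    (fun _ hl => length_eq_sum_of_mem_wordsWithCounts hl)
    (fun _ hl => sum_map_stepWeight_of_mem_wordsWithCounts hl)
  have hwords := ncard_wordsWithCounts_mul_prod_factorial (stepCounts d (r * d + 1) k)
  rw [← image_append_right_Sch,
    Set.ncard_image_of_injective _ (List.append_left_injective _)] at hcycle
  simp only [SStep.sum_univ, SStep.prod_univ, stepCounts] at hcycle hwords
  rw [← hcycle, show d + (r * d + 1) + k = (r * d + d + k) + 1 by ring, Nat.factorial_succ,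
    mul_assoc] at hwords
  exact Nat.eq_of_mul_eq_mul_left (Nat.succ_pos _) hwords

lemma succ_mul_eq_choose_mul_choose {c m d k : ℕ}
    (h : c * (d ! * (m + 1)! * k !) = (m + d + k)!) :
    (m + 1) * c = (d + k).choose d * (m + (d + k)).choose (d + k) := by
  have hdk : (d + k).choose d * d ! * k ! = (d + k)! := by
    simpa using Nat.choose_mul_factorial_mul_factorial (Nat.le_add_right d k)
  apply Nat.eq_of_mul_eq_mul_right (by positivity : 0 < d ! * m ! * k !)
  calc (m + 1) * c * (d ! * m ! * k !) = c * (d ! * (m + 1)! * k !) := by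
        rw [Nat.factorial_succ]; ring
    _ = (m + (d + k)).choose (d + k) * m ! * (d + k)! := by
        rw [h, Nat.add_choose_mul_factorial_mul_factorial, add_assoc]
    _ = _ := by rw [← hdk]; ring

theorem fschroder_schroder_bijection_general (r n k : ℕ) (hk : k ≤ n) :
    Set.BijOn (fun α => (α.map reflStep).reverse) (FSch r n k) (Sch r n (n - k)) ∧
    (FSch r n k).ncard = (Sch r n (n - k)).ncard ∧
    ((n - k) * r + 1) * (FSch r n k).ncard
      = Nat.choose n (n - k) * Nat.choose ((n - k) * r + n) n := by
  have hbij := bijOn_reflectPath_FSch_Sch (r := r) hk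
  have hcard : (FSch r n k).ncard = (Sch r n (n - k)).ncard := by
    rw [← hbij.image_eq, hbij.injOn.ncard_image]
  refine ⟨hbij, hcard, ?_⟩
  obtain ⟨d, rfl⟩ : ∃ d, n = d + k := ⟨n - k, by omega⟩
  rw [hcard, Nat.add_sub_cancel, mul_comm d r]
  exact succ_mul_eq_choose_mul_choose (ncard_Sch_mul_factorial r d k)

/-- For `r, n ≥ 1` and `0 ≤ k ≤ n`, reflection across the anti-diagonal is a bijection
from the `r`-FSchröder paths of size `n` with `k` diagonal steps onto the `r`-Schröder
paths of size `n` with `k` diagonal steps (`Sch r n (n-k)`); hence the two sets are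
equinumerous and `|FSch r n k| = |Sch_{n,n-k}^r| = (1/((n-k)r+1)) C(n,n-k) C((n-k)r+n,n)`. -/
theorem fschroder_schroder_bijection (r n k : ℕ) (hr : 1 ≤ r) (hn : 1 ≤ n) (hk : k ≤ n) :
    Set.BijOn (fun α => (α.map reflStep).reverse) (FSch r n k) (Sch r n (n - k)) ∧
    (FSch r n k).ncard = (Sch r n (n - k)).ncard ∧
    ((n - k) * r + 1) * (FSch r n k).ncard
      = Nat.choose n (n - k) * Nat.choose ((n - k) * r + n) n :=
  fschroder_schroder_bijection_general r n k hk
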